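/- For the chain-of-oscillators quadratic symbol, the triple intersection Ker(Re F) ∩ Ker(Re F · Im F) ∩ Ker(Re F · (Im F)²) ∩ R^{12} is {0} if and only if (a+c-1)(b+c-1) - c² ≠ 0. -/
import Mathlib


/-- `Re F` for the chain-of-oscillators symbol; coordinates
`(x₁,x₂,y₁,y₂,z₁,z₂,ξ₁,ξ₂,η₁,η₂,ζ₁,ζ₂)` indexed by `0,…,11`. -/
def oscReF (α₁ α₂ β₁ β₂ : ℝ) (X : Fin 12 → ℝ) : Fin 12 → ℝ :=
  ![0, 0, 0, 0, α₁ * X 10, α₂ * X 11,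
    β₁ * (X 4 - X 0), β₂ * (X 5 - X 1), 0, 0,
    -β₁ * (X 4 - X 0), -β₂ * (X 5 - X 1)]

/-- `Im F` for the chain-of-oscillators symbol. -/
noncomputable def oscImF (a b c δ₁ δ₂ : ℝ) (X : Fin 12 → ℝ) : Fin 12 → ℝ :=
  ![X 2 / 2, X 3 / 2,
    -((a + c) * X 0 - c * X 1 - X 4) / 2,
    -(-c * X 0 + (b + c) * X 1 - X 5) / 2,
    δ₁ * (X 4 - X 0), δ₂ * (X 5 - X 1),
    δ₁ * X 10 + (a + c) * X 8 / 2 - c * X 9 / 2,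
    δ₂ * X 11 - c * X 8 / 2 + (b + c) * X 9 / 2,
    -X 6 / 2, -X 7 / 2,
    -(δ₁ * X 10) - X 8 / 2, -(δ₂ * X 11) - X 9 / 2]

private lemma vec12_ext {f g : Fin 12 → ℝ} (h0 : f 0 = g 0) (h1 : f 1 = g 1)
    (h2 : f 2 = g 2) (h3 : f 3 = g 3) (h4 : f 4 = g 4) (h5 : f 5 = g 5)
    (h6 : f 6 = g 6) (h7 : f 7 = g 7) (h8 : f 8 = g 8) (h9 : f 9 = g 9)
    (h10 : f 10 = g 10) (h11 : f 11 = g 11) : f = g := by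
  funext i; fin_cases i <;> assumption

private lemma osc_mem_aux (a b c α₁ α₂ β₁ β₂ δ₁ δ₂ v w : ℝ)
    (hA : (a + c - 1) * v - c * w = 0) (hB : -c * v + (b + c - 1) * w = 0) :
    oscReF α₁ α₂ β₁ β₂ ![v, w, 0, 0, v, w, 0, 0, 0, 0, 0, 0] = 0 ∧
    oscReF α₁ α₂ β₁ β₂ (oscImF a b c δ₁ δ₂ ![v, w, 0, 0, v, w, 0, 0, 0, 0, 0, 0]) = 0 ∧
    oscReF α₁ α₂ β₁ β₂ (oscImF a b c δ₁ δ₂ (oscImF a b c δ₁ δ₂ ![v, w, 0, 0, v, w, 0, 0, 0, 0, 0, 0])) = 0 := by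
  refine ⟨?_, ?_, ?_⟩
  · apply vec12_ext <;> first
      | rfl
      | (show α₁ * (0:ℝ) = 0; ring)
      | (show α₂ * (0:ℝ) = 0; ring)
      | (show β₁ * (v - v) = 0; ring)
      | (show β₂ * (w - w) = 0; ring)
      | (show -β₁ * (v - v) = 0; ring)
      | (show -β₂ * (w - w) = 0; ring)
  · apply vec12_ext <;> first
      | rfl
      | (show α₁ * (-(δ₁ * (0:ℝ)) - 0 / 2) = 0; ring)
      | (show α₂ * (-(δ₂ * (0:ℝ)) - 0 / 2) = 0; ring)
      | (show β₁ * (δ₁ * (v - v) - 0 / 2) = 0; ring)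
      | (show β₂ * (δ₂ * (w - w) - 0 / 2) = 0; ring)
      | (show -β₁ * (δ₁ * (v - v) - 0 / 2) = 0; ring)
      | (show -β₂ * (δ₂ * (w - w) - 0 / 2) = 0; ring)
  · apply vec12_ext <;> first
      | rfl
      | (show α₁ * (-(δ₁ * (-(δ₁ * (0:ℝ)) - 0 / 2)) - (-(0:ℝ) / 2) / 2) = 0; ring)
      | (show α₂ * (-(δ₂ * (-(δ₂ * (0:ℝ)) - 0 / 2)) - (-(0:ℝ) / 2) / 2) = 0; ring)
      | (show β₁ * (δ₁ * (δ₁ * (v - v) - 0 / 2) - (-((a + c) * v - c * w - v) / 2) / 2) = 0;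
          linear_combination (β₁ / 4) * hA)
      | (show β₂ * (δ₂ * (δ₂ * (w - w) - 0 / 2) - (-(-c * v + (b + c) * w - w) / 2) / 2) = 0;
          linear_combination (β₂ / 4) * hB)
      | (show -β₁ * (δ₁ * (δ₁ * (v - v) - 0 / 2) - (-((a + c) * v - c * w - v) / 2) / 2) = 0;
          linear_combination (-β₁ / 4) * hA)
      | (show -β₂ * (δ₂ * (δ₂ * (w - w) - 0 / 2) - (-(-c * v + (b + c) * w - w) / 2) / 2) = 0;
          linear_combination (-β₂ / 4) * hB)

/-- For the chain-of-oscillators quadratic symbol, the triple intersection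
`Ker(Re F) ∩ Ker(Re F · Im F) ∩ Ker(Re F · (Im F)²) ∩ ℝ¹²` is `{0}` if and only if
`(a+c-1)(b+c-1) - c² ≠ 0`. -/
theorem oscillators_singular_space_zero_iff
    (a b c α₁ α₂ β₁ β₂ δ₁ δ₂ : ℝ)
    (hα₁ : 0 < α₁) (hα₂ : 0 < α₂) (hβ₁ : 0 < β₁) (hβ₂ : 0 < β₂) :
    {X : Fin 12 → ℝ |
        oscReF α₁ α₂ β₁ β₂ X = 0 ∧
        oscReF α₁ α₂ β₁ β₂ (oscImF a b c δ₁ δ₂ X) = 0 ∧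
        oscReF α₁ α₂ β₁ β₂ (oscImF a b c δ₁ δ₂ (oscImF a b c δ₁ δ₂ X)) = 0} = {0}
      ↔ (a + c - 1) * (b + c - 1) - c ^ 2 ≠ 0 := by
  constructor
  · intro hset hdet
    -- build a nonzero solution
    obtain ⟨v, w, hvw, hA, hB⟩ :
        ∃ v w : ℝ, ¬(v = 0 ∧ w = 0) ∧ (a + c - 1) * v - c * w = 0 ∧
          -c * v + (b + c - 1) * w = 0 := by
      by_cases hc : c = 0 ∧ a + c - 1 = 0
      · exact ⟨1, 0, by norm_num, by linear_combination hc.2, by linear_combination -hc.1⟩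
      · refine ⟨c, a + c - 1, ?_, by ring, by linear_combination hdet⟩
        exact fun h => hc ⟨h.1, h.2⟩
    have hmem : ![v, w, 0, 0, v, w, 0, 0, 0, 0, 0, 0] ∈
        {X : Fin 12 → ℝ |
          oscReF α₁ α₂ β₁ β₂ X = 0 ∧
          oscReF α₁ α₂ β₁ β₂ (oscImF a b c δ₁ δ₂ X) = 0 ∧
          oscReF α₁ α₂ β₁ β₂ (oscImF a b c δ₁ δ₂ (oscImF a b c δ₁ δ₂ X)) = 0} :=
      osc_mem_aux a b c α₁ α₂ β₁ β₂ δ₁ δ₂ v w hA hB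
    rw [hset] at hmem
    have h0 : v = 0 := congrFun hmem 0
    have h1 : w = 0 := congrFun hmem 1
    exact hvw ⟨h0, h1⟩
  · intro hdet
    ext X
    simp only [Set.mem_setOf_eq, Set.mem_singleton_iff]
    constructor
    · rintro ⟨h1, h2, h3⟩
      have e4 : α₁ * X 10 = 0 := congrFun h1 4
      have e5 : α₂ * X 11 = 0 := congrFun h1 5
      have e6 : β₁ * (X 4 - X 0) = 0 := congrFun h1 6
      have e7 : β₂ * (X 5 - X 1) = 0 := congrFun h1 7
      have hX10 : X 10 = 0 := by
        rcases mul_eq_zero.mp e4 with h | h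
        · exact absurd h hα₁.ne'
        · exact h
      have hX11 : X 11 = 0 := by
        rcases mul_eq_zero.mp e5 with h | h
        · exact absurd h hα₂.ne'
        · exact h
      have hX4 : X 4 = X 0 := by
        rcases mul_eq_zero.mp e6 with h | h
        · exact absurd h hβ₁.ne'
        · linarith
      have hX5 : X 5 = X 1 := by
        rcases mul_eq_zero.mp e7 with h | h
        · exact absurd h hβ₂.ne'
        · linarith
      have f4 : α₁ * (-(δ₁ * X 10) - X 8 / 2) = 0 := congrFun h2 4
      have f5 : α₂ * (-(δ₂ * X 11) - X 9 / 2) = 0 := congrFun h2 5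
      have f6 : β₁ * (δ₁ * (X 4 - X 0) - X 2 / 2) = 0 := congrFun h2 6
      have f7 : β₂ * (δ₂ * (X 5 - X 1) - X 3 / 2) = 0 := congrFun h2 7
      have hX8 : X 8 = 0 := by
        rcases mul_eq_zero.mp f4 with h | h
        · exact absurd h hα₁.ne'
        · linear_combination -2 * h - 2 * δ₁ * hX10
      have hX9 : X 9 = 0 := by
        rcases mul_eq_zero.mp f5 with h | h
        · exact absurd h hα₂.ne'
        · linear_combination -2 * h - 2 * δ₂ * hX11
      have hX2 : X 2 = 0 := by
        rcases mul_eq_zero.mp f6 with h | h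
        · exact absurd h hβ₁.ne'
        · linear_combination -2 * h + 2 * δ₁ * hX4
      have hX3 : X 3 = 0 := by
        rcases mul_eq_zero.mp f7 with h | h
        · exact absurd h hβ₂.ne'
        · linear_combination -2 * h + 2 * δ₂ * hX5
      have g4 : α₁ * (-(δ₁ * (-(δ₁ * X 10) - X 8 / 2)) - (-X 6 / 2) / 2) = 0 := congrFun h3 4
      have g5 : α₂ * (-(δ₂ * (-(δ₂ * X 11) - X 9 / 2)) - (-X 7 / 2) / 2) = 0 := congrFun h3 5
      have g6 : β₁ * (δ₁ * (δ₁ * (X 4 - X 0) - X 2 / 2) -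
          (-((a + c) * X 0 - c * X 1 - X 4) / 2) / 2) = 0 := congrFun h3 6
      have g7 : β₂ * (δ₂ * (δ₂ * (X 5 - X 1) - X 3 / 2) -
          (-(-c * X 0 + (b + c) * X 1 - X 5) / 2) / 2) = 0 := congrFun h3 7
      have hX6 : X 6 = 0 := by
        rcases mul_eq_zero.mp g4 with h | h
        · exact absurd h hα₁.ne'
        · linear_combination 4 * h - 4 * δ₁ ^ 2 * hX10 - 2 * δ₁ * hX8
      have hX7 : X 7 = 0 := by
        rcases mul_eq_zero.mp g5 with h | h
        · exact absurd h hα₂.ne'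
        · linear_combination 4 * h - 4 * δ₂ ^ 2 * hX11 - 2 * δ₂ * hX9
      have hA : (a + c - 1) * X 0 - c * X 1 = 0 := by
        rcases mul_eq_zero.mp g6 with h | h
        · exact absurd h hβ₁.ne'
        · linear_combination 4 * h + (1 - 4 * δ₁ ^ 2) * hX4 + 2 * δ₁ * hX2
      have hB : -c * X 0 + (b + c - 1) * X 1 = 0 := by
        rcases mul_eq_zero.mp g7 with h | h
        · exact absurd h hβ₂.ne'
        · linear_combination 4 * h + (1 - 4 * δ₂ ^ 2) * hX5 + 2 * δ₂ * hX3
      have hX0 : X 0 = 0 := by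
        have hd : ((a + c - 1) * (b + c - 1) - c ^ 2) * X 0 = 0 := by
          linear_combination (b + c - 1) * hA + c * hB
        exact (mul_eq_zero.mp hd).resolve_left hdet
      have hX1 : X 1 = 0 := by
        have hd : ((a + c - 1) * (b + c - 1) - c ^ 2) * X 1 = 0 := by
          linear_combination c * hA + (a + c - 1) * hB
        exact (mul_eq_zero.mp hd).resolve_left hdet
      have hX4' : X 4 = 0 := by rw [hX4, hX0]
      have hX5' : X 5 = 0 := by rw [hX5, hX1]
      exact vec12_ext hX0 hX1 hX2 hX3 hX4' hX5' hX6 hX7 hX8 hX9 hX10 hX11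
    · rintro rfl
      have h0 : oscReF α₁ α₂ β₁ β₂ (0 : Fin 12 → ℝ) = 0 := by
        apply vec12_ext <;> first
          | rfl
          | (show α₁ * (0:ℝ) = 0; ring)
          | (show α₂ * (0:ℝ) = 0; ring)
          | (show β₁ * ((0:ℝ) - 0) = 0; ring)
          | (show β₂ * ((0:ℝ) - 0) = 0; ring)
          | (show -β₁ * ((0:ℝ) - 0) = 0; ring)
          | (show -β₂ * ((0:ℝ) - 0) = 0; ring)
      have him : oscImF a b c δ₁ δ₂ (0 : Fin 12 → ℝ) = 0 := by
        apply vec12_ext <;> first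
          | rfl
          | (show (0:ℝ) / 2 = 0; ring)
          | (show -((a + c) * 0 - c * 0 - (0:ℝ)) / 2 = 0; ring)
          | (show -(-c * 0 + (b + c) * 0 - (0:ℝ)) / 2 = 0; ring)
          | (show δ₁ * ((0:ℝ) - 0) = 0; ring)
          | (show δ₂ * ((0:ℝ) - 0) = 0; ring)
          | (show δ₁ * 0 + (a + c) * 0 / 2 - c * (0:ℝ) / 2 = 0; ring)
          | (show δ₂ * 0 - c * 0 / 2 + (b + c) * (0:ℝ) / 2 = 0; ring)
          | (show -(0:ℝ) / 2 = 0; ring)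
          | (show -(δ₁ * (0:ℝ)) - 0 / 2 = 0; ring)
          | (show -(δ₂ * (0:ℝ)) - 0 / 2 = 0; ring)
      exact ⟨h0, by rw [him]; exact h0, by rw [him, him]; exact h0⟩
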